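/- Let χ be a Dirichlet character modulo N, τ ∈ ℍ (upper half-plane), z ∈ ℂ, and F(x) = e^{iπτx² - 2πzx} Φ_N(x; χ), where Φ_N(x; χ) = (Σ_{k=1}^{N-1} χ(k) e^{2πkx/√N})/(1 - e^{2πx√N}). Then for each n with 1 ≤ n ≤ N-1, the residue of F at x = in/√N equals -(g_n(χ)/(2π√N)) e^{-iπn²τ/N - 2πinz/√N}, where g_n(χ) = Σ_{k=1}^{N-1} χ(k) e^{2πikn/N}. In particular, when χ is primitive this equals -(g(χ) conj(χ(n))/(2π√N)) e^{-iπn²τ/N - 2πinz/√N}. -/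
import Mathlib

open Finset Complex Filter

noncomputable def PhiChi (N : ℕ) (χ : DirichletCharacter ℂ N) (t : ℂ) : ℂ :=
  (∑ k ∈ Finset.Ico 1 N, χ (k : ZMod N) * Complex.exp (2 * Real.pi * k * t / Real.sqrt N)) /
    (1 - Complex.exp (2 * Real.pi * t * Real.sqrt N))

noncomputable def gaussN (N : ℕ) (χ : DirichletCharacter ℂ N) (n : ℕ) : ℂ :=
  ∑ k ∈ Finset.Ico 1 N, χ (k : ZMod N) * Complex.exp (2 * Real.pi * Complex.I * k * n / N)

private lemma sum_zmod_eq {N : ℕ} [NeZero N] (f : ZMod N → ℂ) :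
    ∑ a : ZMod N, f a = ∑ k ∈ Finset.range N, f (k : ZMod N) := by
  refine Finset.sum_nbij' (fun a : ZMod N => a.val) (fun k : ℕ => (k : ZMod N)) ?_ ?_ ?_ ?_ ?_
  · intro a _; exact Finset.mem_range.mpr (ZMod.val_lt a)
  · intro k _; exact Finset.mem_univ _
  · intro a _; exact ZMod.natCast_rightInverse a
  · intro k hk; exact ZMod.val_cast_of_lt (Finset.mem_range.mp hk)
  · intro a _; rw [ZMod.natCast_rightInverse a]

private lemma gaussN_eq {N : ℕ} [NeZero N] (hN : 2 ≤ N) (χ : DirichletCharacter ℂ N) (m : ℕ) :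
    gaussN N χ m = gaussSum χ ((ZMod.stdAddChar (N := N)).mulShift (m : ZMod N)) := by
  haveI : Fact (1 < N) := ⟨by omega⟩
  unfold gaussN gaussSum
  rw [sum_zmod_eq]
  rw [← Finset.sum_subset (fun x hx => Finset.mem_range.mpr (Finset.mem_Ico.mp hx).2)
      (fun x hx hx' => ?_)]
  · refine Finset.sum_congr rfl fun k hk => ?_
    congr 1
    rw [AddChar.mulShift_apply,
      show ((m : ZMod N) * (k : ZMod N)) = (((m * k : ℕ) : ℤ) : ZMod N) by push_cast; ring,
      ZMod.stdAddChar_coe]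
    congr 1
    push_cast
    ring
  · have hx0 : x = 0 := by
      simp only [Finset.mem_range, Finset.mem_Ico] at hx hx'
      omega
    subst hx0
    rw [Nat.cast_zero, MulChar.map_nonunit χ not_isUnit_zero, zero_mul]

theorem residue_of_F (N : ℕ) (hN : 2 ≤ N) (χ : DirichletCharacter ℂ N)
    (τ z : ℂ) (hτ : 0 < τ.im) (n : ℕ) (hn1 : 1 ≤ n) (hn2 : n ≤ N - 1) :
    Tendsto
      (fun x : ℂ => (x - Complex.I * n / Real.sqrt N) *
        (Complex.exp (Real.pi * Complex.I * τ * x ^ 2 - 2 * Real.pi * z * x) * PhiChi N χ x))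
      (nhdsWithin (Complex.I * n / Real.sqrt N) {(Complex.I * n / Real.sqrt N : ℂ)}ᶜ)
      (nhds (-(gaussN N χ n / (2 * Real.pi * Real.sqrt N)) *
        Complex.exp (-(Real.pi) * Complex.I * n ^ 2 * τ / N -
          2 * Real.pi * Complex.I * n * z / Real.sqrt N)))
    ∧ (χ.IsPrimitive →
        gaussN N χ n = (starRingEnd ℂ) (χ (n : ZMod N)) * gaussN N χ 1) := by
  haveI : NeZero N := ⟨by omega⟩
  have hNR : (0 : ℝ) < N := by positivity
  have hsR : (0 : ℝ) < Real.sqrt N := Real.sqrt_pos.mpr hNR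
  have hs : ((Real.sqrt N : ℝ) : ℂ) ≠ 0 := Complex.ofReal_ne_zero.mpr hsR.ne'
  have hss : ((Real.sqrt N : ℝ) : ℂ) * ((Real.sqrt N : ℝ) : ℂ) = (N : ℂ) := by
    rw [← Complex.ofReal_mul, Real.mul_self_sqrt hNR.le]
    push_cast; ring
  have hπ : ((Real.pi : ℝ) : ℂ) ≠ 0 := Complex.ofReal_ne_zero.mpr Real.pi_ne_zero
  constructor
  · -- the residue limit
    have h0 : Complex.exp (2 * Real.pi * (Complex.I * n / Real.sqrt N) * Real.sqrt N) = 1 := by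
      rw [show (2 * (Real.pi : ℂ) * (Complex.I * n / Real.sqrt N) * Real.sqrt N)
          = (n : ℂ) * (2 * Real.pi * Complex.I) by field_simp]
      exact Complex.exp_nat_mul_two_pi_mul_I n
    have hD : HasDerivAt (fun x : ℂ => 1 - Complex.exp (2 * Real.pi * x * Real.sqrt N))
        (-(2 * Real.pi * Real.sqrt N)) (Complex.I * n / Real.sqrt N) := by
      have h1 : HasDerivAt (fun x : ℂ => 2 * (Real.pi : ℂ) * x * Real.sqrt N)
          (2 * Real.pi * Real.sqrt N) (Complex.I * n / Real.sqrt N) := by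
        simpa using ((hasDerivAt_id (Complex.I * n / Real.sqrt N)).const_mul
          (2 * (Real.pi : ℂ))).mul_const ((Real.sqrt N : ℝ) : ℂ)
      have h2 := h1.cexp
      rw [h0, one_mul] at h2
      simpa using h2.const_sub 1
    have hslope : Tendsto (fun x : ℂ =>
        (x - Complex.I * n / Real.sqrt N) / (1 - Complex.exp (2 * Real.pi * x * Real.sqrt N)))
        (nhdsWithin (Complex.I * n / Real.sqrt N) {(Complex.I * n / Real.sqrt N : ℂ)}ᶜ)
        (nhds (-(2 * Real.pi * Real.sqrt N))⁻¹) := by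
      have h3 := (hasDerivAt_iff_tendsto_slope.mp hD).inv₀ (by
        simp only [neg_ne_zero]
        exact mul_ne_zero (mul_ne_zero two_ne_zero hπ) hs)
      refine h3.congr fun x => ?_
      rw [slope_def_field, inv_div, h0]
      congr 1
      ring
    have hSx : (∑ k ∈ Finset.Ico 1 N, χ (k : ZMod N) *
        Complex.exp (2 * Real.pi * k * (Complex.I * n / Real.sqrt N) / Real.sqrt N))
        = gaussN N χ n := by
      unfold gaussN
      refine Finset.sum_congr rfl fun k hk => ?_
      congr 1
      rw [show ((N : ℂ)) = ((Real.sqrt N : ℝ) : ℂ) * ((Real.sqrt N : ℝ) : ℂ) from hss.symm]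
      field_simp
    have hEx : Complex.exp (Real.pi * Complex.I * τ * (Complex.I * n / Real.sqrt N) ^ 2
        - 2 * Real.pi * z * (Complex.I * n / Real.sqrt N))
        = Complex.exp (-(Real.pi) * Complex.I * n ^ 2 * τ / N -
          2 * Real.pi * Complex.I * n * z / Real.sqrt N) := by
      congr 1
      have hx2 : (Complex.I * n / Real.sqrt N) ^ 2
          = -((n : ℂ) ^ 2) / (((Real.sqrt N : ℝ) : ℂ) * ((Real.sqrt N : ℝ) : ℂ)) := by
        rw [div_pow, mul_pow, Complex.I_sq]; ring
      rw [hx2, show ((N : ℂ)) = ((Real.sqrt N : ℝ) : ℂ) * ((Real.sqrt N : ℝ) : ℂ) from hss.symm]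
      field_simp
    have hc : ContinuousAt (fun x : ℂ =>
        Complex.exp (Real.pi * Complex.I * τ * x ^ 2 - 2 * Real.pi * z * x) *
        ∑ k ∈ Finset.Ico 1 N, χ (k : ZMod N) *
          Complex.exp (2 * Real.pi * k * x / Real.sqrt N)) (Complex.I * n / Real.sqrt N) := by
      fun_prop
    have hG : Tendsto (fun x : ℂ =>
        Complex.exp (Real.pi * Complex.I * τ * x ^ 2 - 2 * Real.pi * z * x) *
        ∑ k ∈ Finset.Ico 1 N, χ (k : ZMod N) *
          Complex.exp (2 * Real.pi * k * x / Real.sqrt N))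
        (nhdsWithin (Complex.I * n / Real.sqrt N) {(Complex.I * n / Real.sqrt N : ℂ)}ᶜ)
        (nhds (Complex.exp (-(Real.pi) * Complex.I * n ^ 2 * τ / N -
          2 * Real.pi * Complex.I * n * z / Real.sqrt N) * gaussN N χ n)) := by
      have := hc.tendsto.mono_left
        (nhdsWithin_le_nhds (s := {(Complex.I * n / Real.sqrt N : ℂ)}ᶜ))
      rwa [hSx, hEx] at this
    have hmain := hG.mul hslope
    have hval : Complex.exp (-(Real.pi) * Complex.I * n ^ 2 * τ / N -
          2 * Real.pi * Complex.I * n * z / Real.sqrt N) * gaussN N χ n *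
          (-(2 * (Real.pi : ℂ) * ((Real.sqrt N : ℝ) : ℂ)))⁻¹
        = -(gaussN N χ n / (2 * Real.pi * Real.sqrt N)) *
          Complex.exp (-(Real.pi) * Complex.I * n ^ 2 * τ / N -
            2 * Real.pi * Complex.I * n * z / Real.sqrt N) := by
      rw [← neg_inv]; ring
    rw [hval] at hmain
    refine hmain.congr fun x => ?_
    unfold PhiChi
    ring
  · -- Gauss sum twist for primitive χ
    intro hχ
    rw [gaussN_eq hN χ n, gaussN_eq hN χ 1,
      gaussSum_mulShift_of_isPrimitive _ hχ, Nat.cast_one, AddChar.mulShift_one]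
    congr 1
    rw [starRingEnd_apply, MulChar.star_apply']
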